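/- For 0 ≤ k ≤ ⌊n/2⌋, (1+q^{n+2}) T_{n+2}^k(x,s,q) = U_{n+2}^k(x,s,q) + q^{2n+3} s U_n^{k-1}(x,s,q). -/

import Mathlib

/-- q-integer [n]_q = (1-q^n)/(1-q). -/
noncomputable def qint (q : ℂ) (n : ℕ) : ℂ := (1 - q ^ n) / (1 - q)

/-- q-factorial [n]_q!. -/
noncomputable def qfact (q : ℂ) (n : ℕ) : ℂ := ∏ i ∈ Finset.range n, qint q (i + 1)

/-- Gaussian (q-binomial) coefficient, 0 for k > n. -/
noncomputable def qbinom (q : ℂ) (n k : ℕ) : ℂ :=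
  if k ≤ n then qfact q n / (qfact q (n - k) * qfact q k) else 0

/-- q-shifted factorial (x;q)_n. -/
noncomputable def qpoch (x q : ℂ) (n : ℕ) : ℂ := ∏ i ∈ Finset.range n, (1 - q ^ i * x)

/-- Partial sum defining incomplete q-Chebyshev polynomials of the second kind:
`Usum x s q n (k+1)` is U_n^k(x,s,q), and `Usum x s q n 0 = 0` is the empty sum (k = -1). -/
noncomputable def Usum (x s q : ℂ) (n m : ℕ) : ℂ :=
  ∑ j ∈ Finset.range m,
    q ^ (j ^ 2) * qbinom q (n - j) j * (qpoch (-q) q (n - j) / qpoch (-q) q j) *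
      s ^ j * x ^ (n - 2 * j)

/-- Partial sum defining incomplete q-Chebyshev polynomials of the first kind:
`Tsum x s q n (k+1)` is T_n^k(x,s,q). -/
noncomputable def Tsum (x s q : ℂ) (n m : ℕ) : ℂ :=
  ∑ j ∈ Finset.range m,
    q ^ (j ^ 2) * (qint q n / qint q (n - j)) * qbinom q (n - j) j *
      (qpoch (-q) q (n - j - 1) / qpoch (-q) q j) * s ^ j * x ^ (n - 2 * j)

/-!
The identity holds term by term: the `j = 0` terms agree because `(-q;q)_{n+1} (1 + q^{n+2})
= (-q;q)_{n+2}`, and the `j`-th term of the left side splits into the `j`-th term of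
`U_{n+2}` and the `(j-1)`-st term of `U_n`. After cancelling the common factor and using the
absorption identity `[a] [a-1 choose j-1] = [j] [a choose j]` with `a = n + 2 - j`, this
splitting is `(1 - q^{2a}) + q^{2a} (1 - q^{2j}) = 1 - q^{2(n+2)}`.
-/

open Finset

variable {q : ℂ}

lemma one_sub_pow_ne_zero (hq : ¬IsOfFinOrder q) {m : ℕ} (hm : m ≠ 0) : 1 - q ^ m ≠ 0 :=
  fun h => hq (isOfFinOrder_iff_pow_eq_one.2 ⟨m, Nat.pos_of_ne_zero hm, by linear_combination -h⟩)

lemma one_add_pow_ne_zero (hq : ¬IsOfFinOrder q) {m : ℕ} (hm : m ≠ 0) : 1 + q ^ m ≠ 0 := by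
  have h2m : (1 - q ^ m) * (1 + q ^ m) = 1 - q ^ (2 * m) := by ring
  exact right_ne_zero_of_mul (h2m ▸ one_sub_pow_ne_zero hq (by omega))

lemma one_sub_ne_zero (hq : ¬IsOfFinOrder q) : 1 - q ≠ 0 := by
  simpa using one_sub_pow_ne_zero hq one_ne_zero

lemma qint_ne_zero (hq : ¬IsOfFinOrder q) {m : ℕ} (hm : m ≠ 0) : qint q m ≠ 0 :=
  div_ne_zero (one_sub_pow_ne_zero hq hm) (one_sub_ne_zero hq)

lemma qfact_ne_zero (hq : ¬IsOfFinOrder q) (m : ℕ) : qfact q m ≠ 0 :=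
  prod_ne_zero_iff.2 fun i _ => qint_ne_zero hq i.succ_ne_zero

lemma qfact_succ (m : ℕ) : qfact q (m + 1) = qfact q m * qint q (m + 1) :=
  prod_range_succ _ m

lemma qpoch_neg_eq_prod (m : ℕ) : qpoch (-q) q m = ∏ i ∈ range m, (1 + q ^ (i + 1)) :=
  prod_congr rfl fun i _ => by ring

lemma qpoch_neg_ne_zero (hq : ¬IsOfFinOrder q) (m : ℕ) : qpoch (-q) q m ≠ 0 := by
  rw [qpoch_neg_eq_prod]
  exact prod_ne_zero_iff.2 fun i _ => one_add_pow_ne_zero hq i.succ_ne_zero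

lemma qpoch_neg_succ (m : ℕ) : qpoch (-q) q (m + 1) = qpoch (-q) q m * (1 + q ^ (m + 1)) := by
  rw [qpoch_neg_eq_prod, qpoch_neg_eq_prod, prod_range_succ]

lemma qint_mul_qbinom (hq : ¬IsOfFinOrder q) {a j : ℕ} (hj : j ≤ a) :
    qint q (a + 1) * qbinom q a j = qint q (j + 1) * qbinom q (a + 1) (j + 1) := by
  rw [qbinom, qbinom, if_pos hj, if_pos (by omega), Nat.add_sub_add_right, qfact_succ,
    qfact_succ]
  have := qfact_ne_zero hq (a - j)
  have := qfact_ne_zero hq j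
  have := qint_ne_zero hq j.succ_ne_zero
  field_simp

noncomputable def Uterm (x s q : ℂ) (n j : ℕ) : ℂ :=
  q ^ (j ^ 2) * qbinom q (n - j) j * (qpoch (-q) q (n - j) / qpoch (-q) q j) *
    s ^ j * x ^ (n - 2 * j)

noncomputable def Tterm (x s q : ℂ) (n j : ℕ) : ℂ :=
  q ^ (j ^ 2) * (qint q n / qint q (n - j)) * qbinom q (n - j) j *
    (qpoch (-q) q (n - j - 1) / qpoch (-q) q j) * s ^ j * x ^ (n - 2 * j)

lemma Usum_eq_sum (x s : ℂ) (n m : ℕ) : Usum x s q n m = ∑ j ∈ range m, Uterm x s q n j := rfl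

lemma Tsum_eq_sum (x s : ℂ) (n m : ℕ) : Tsum x s q n m = ∑ j ∈ range m, Tterm x s q n j := rfl

lemma Tterm_zero (hq : ¬IsOfFinOrder q) (x s : ℂ) (n : ℕ) :
    (1 + q ^ (n + 2)) * Tterm x s q (n + 2) 0 = Uterm x s q (n + 2) 0 := by
  have hpred : n + 2 - 1 = n + 1 := rfl
  simp only [Tterm, Uterm, Nat.sub_zero, hpred, div_self (qint_ne_zero hq (n + 1).succ_ne_zero),
    qpoch_neg_succ (n + 1)]
  ring

lemma Tterm_succ (hq : ¬IsOfFinOrder q) (x s : ℂ) {n j : ℕ} (hj : 2 * j ≤ n) :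
    (1 + q ^ (n + 2)) * Tterm x s q (n + 2) (j + 1) =
      Uterm x s q (n + 2) (j + 1) + q ^ (2 * n + 3) * s * Uterm x s q n j := by
  obtain ⟨d, rfl⟩ : ∃ d, n = 2 * j + d := ⟨n - 2 * j, by omega⟩
  have hsub : 2 * j + d + 2 - (j + 1) = j + d + 1 := by omega
  have hsub2 : 2 * j + d + 2 - 2 * (j + 1) = d := by omega
  have hsub3 : 2 * j + d - j = j + d := by omega
  have hsub4 : 2 * j + d - 2 * j = d := by omega
  have habs : qbinom q (j + d) j =
      qint q (j + 1) * qbinom q (j + d + 1) (j + 1) / qint q (j + d + 1) := by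
    rw [eq_div_iff (qint_ne_zero hq (j + d).succ_ne_zero), mul_comm,
      qint_mul_qbinom hq (Nat.le_add_right j d)]
  simp only [Tterm, Uterm, hsub, hsub2, hsub3, hsub4, Nat.add_sub_cancel, qpoch_neg_succ, habs]
  have := qpoch_neg_ne_zero hq j
  have := one_add_pow_ne_zero hq j.succ_ne_zero
  have := one_sub_pow_ne_zero hq (j + d).succ_ne_zero
  have := one_sub_ne_zero hq
  unfold qint
  field_simp
  ring

theorem Tinc_Uinc_combination_general (q : ℂ) (hq1 : ‖q‖ < 1)
    (x s : ℂ) (n k : ℕ) (hk : 2 * k ≤ n) :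
    (1 + q ^ (n + 2)) * Tsum x s q (n + 2) (k + 1) =
      Usum x s q (n + 2) (k + 1) + q ^ (2 * n + 3) * s * Usum x s q n k := by
  have hq : ¬IsOfFinOrder q := fun h => hq1.ne h.norm_eq_one
  rw [Tsum_eq_sum, Usum_eq_sum, Usum_eq_sum, mul_sum, sum_range_succ', sum_range_succ',
    Tterm_zero hq, sum_congr rfl fun j hj => Tterm_succ hq x s (by simp at hj; omega),
    sum_add_distrib, ← mul_sum]
  ring

theorem Tinc_Uinc_combination (q : ℂ) (hq0 : 0 < ‖q‖) (hq1 : ‖q‖ < 1)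
    (x s : ℂ) (n k : ℕ) (hk : 2 * k ≤ n) :
    (1 + q ^ (n + 2)) * Tsum x s q (n + 2) (k + 1) =
      Usum x s q (n + 2) (k + 1) + q ^ (2 * n + 3) * s * Usum x s q n k :=
  Tinc_Uinc_combination_general q hq1 x s n k hk
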